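/- arXiv:2304.03474 — 2 statements merged into one kernel-verified Lean document; each statement's English description precedes it below -/
import Mathlib

section
/- For 0 < α < 1 and 0 ≤ t < r (real numbers with ε > 0, t + ε ≤ r), the integral ∫_{t+ε}^{r} (r - y)^{α-1} (y - t)^{-α-1} dy equals (1/(α ε^α)) · (r - t - ε)^α / (r - t). -/
open MeasureTheory Real

/- The integrand has the elementary antiderivative
`-(r - y)^α (y - t)^(-α) / (α (r - t))`: differentiating `(r - y)^α (y - t)^(-α)` produces
`-α (r - y)^(α-1) (y - t)^(-α-1)` times `(y - t) + (r - y) = r - t`. The singularity at `y = r`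
is integrable because `α - 1 > -1`, and the antiderivative vanishes there. -/

lemma hasDerivAt_sub_rpow_mul_sub_rpow_neg {α t r y : ℝ} (hty : t < y) (hyr : y < r) :
    HasDerivAt (fun y => (r - y) ^ α * (y - t) ^ (-α))
      (-(α * (r - t)) * ((r - y) ^ (α - 1) * (y - t) ^ (-α - 1))) y := by
  have hry : 0 < r - y := by linarith
  have hyt : 0 < y - t := by linarith
  have hleft : HasDerivAt (fun y => (r - y) ^ α) (-1 * α * (r - y) ^ (α - 1)) y :=
    ((hasDerivAt_id' y).const_sub r).rpow_const (Or.inl hry.ne')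
  have hright : HasDerivAt (fun y => (y - t) ^ (-α)) (1 * -α * (y - t) ^ (-α - 1)) y :=
    ((hasDerivAt_id' y).sub_const t).rpow_const (Or.inl hyt.ne')
  refine (hleft.mul hright).congr_deriv ?_
  have hsplit_left : (r - y) ^ α = (r - y) ^ (α - 1) * (r - y) := by
    rw [← rpow_add_one hry.ne']; ring_nf
  have hsplit_right : (y - t) ^ (-α) = (y - t) ^ (-α - 1) * (y - t) := by
    rw [← rpow_add_one hyt.ne']; ring_nf
  rw [hsplit_left, hsplit_right]
  ring

lemma intervalIntegrable_sub_rpow_mul_sub_rpow {α β t a r : ℝ} (hα : 0 < α) (hta : t < a)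
    (har : a ≤ r) :
    IntervalIntegrable (fun y => (r - y) ^ (α - 1) * (y - t) ^ β) volume a r := by
  have hleft : IntervalIntegrable (fun y => (r - y) ^ (α - 1)) volume a r := by
    simpa using (intervalIntegral.intervalIntegrable_rpow' (a := r - a) (b := r - r)
      (r := α - 1) (by linarith)).comp_sub_left r
  refine hleft.mul_continuousOn fun y hy => ?_
  rw [Set.uIcc_of_le har] at hy
  exact ((continuous_sub_right t).continuousAt.rpow_const
    (Or.inl (sub_pos.2 (hta.trans_le hy.1)).ne')).continuousWithinAt

theorem integral_sub_rpow_mul_sub_rpow_neg {α t a r : ℝ} (hα : 0 < α) (hta : t < a)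
    (har : a ≤ r) :
    ∫ y in a..r, (r - y) ^ (α - 1) * (y - t) ^ (-α - 1) =
      (r - a) ^ α * (a - t) ^ (-α) / (α * (r - t)) := by
  have hrt : 0 < r - t := by linarith
  set F : ℝ → ℝ := fun y => (r - y) ^ α * (y - t) ^ (-α)
  have hF_cont : ContinuousOn F (Set.Icc a r) := fun y hy =>
    (((continuous_sub_left r).continuousAt.rpow_const (Or.inr hα.le)).mul
      ((continuous_sub_right t).continuousAt.rpow_const
        (Or.inl (sub_pos.2 (hta.trans_le hy.1)).ne'))).continuousWithinAt
  have hF_deriv : ∀ y ∈ Set.Ioo a r, HasDerivAt (fun y => -F y / (α * (r - t)))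
      ((r - y) ^ (α - 1) * (y - t) ^ (-α - 1)) y := fun y hy => by
    refine ((hasDerivAt_sub_rpow_mul_sub_rpow_neg (hta.trans hy.1) hy.2).neg.div_const
      (α * (r - t))).congr_deriv ?_
    field_simp
  rw [intervalIntegral.integral_eq_sub_of_hasDerivAt_of_le har
    (hF_cont.neg.div_const _) hF_deriv
    (intervalIntegrable_sub_rpow_mul_sub_rpow hα hta har)]
  simp only [Pi.neg_apply, F, sub_self, zero_rpow hα.ne', zero_mul]
  ring

theorem kipriyanov_kernel_integral_general
    (α ε t r : ℝ) (hα : 0 < α) (hε : 0 < ε)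
    (htr : t + ε < r) :
    ∫ y in (t + ε)..r, (r - y) ^ (α - 1) * (y - t) ^ (-α - 1) =
      (1 / (α * ε ^ α)) * ((r - t - ε) ^ α / (r - t)) := by
  rw [integral_sub_rpow_mul_sub_rpow_neg hα (by linarith) htr.le, add_sub_cancel_left,
    rpow_neg hε.le, sub_add_eq_sub_sub]
  have : 0 < ε ^ α := rpow_pos_of_pos hε α
  field_simp

/-- For `0 < α < 1`, `ε > 0`, `0 ≤ t` and `t + ε < r`, the integral
`∫_{t+ε}^{r} (r - y)^{α-1} (y - t)^{-α-1} dy` equals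
`(1/(α ε^α)) · (r - t - ε)^α / (r - t)`. -/
theorem kipriyanov_kernel_integral
    (α ε t r : ℝ) (hα : 0 < α) (hα1 : α < 1) (hε : 0 < ε) (ht : 0 ≤ t)
    (htr : t + ε < r) :
    ∫ y in (t + ε)..r, (r - y) ^ (α - 1) * (y - t) ^ (-α - 1) =
      (1 / (α * ε ^ α)) * ((r - t - ε) ^ α / (r - t)) :=
  kipriyanov_kernel_integral_general α ε t r hα hε htr
end

section
/- Define K(t) = (sin(απ)/π) · (t₊^α − (t−1)₊^α)/t for t > 0, where x₊ = max(x,0) and α ∈ (0,1). Then K(t) > 0 for all t > 0 and ∫_0^∞ K(t) dt = 1. -/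
/-!
The substitution `t = 1/u` turns `∫₀^∞ (t₊^α - (t-1)₊^α) dt / t` into
`∫₀^∞ u^(-α-1) (1 - (1-u)₊^α) du`. Over `(1, ∞)` this is `∫ u^(-α-1) = 1/α`. Over `(0, 1)`,
`H(u) = u^(-α) (1 - (1-u)^α)` increases from `0` to `1` and
`H' = α (u^(-α) (1-u)^(α-1) - u^(-α-1) (1 - (1-u)^α))`, so that part is `B(1-α, α) - 1/α`.
Hence the integral is `B(1-α, α) = Γ(α) Γ(1-α) = π / sin (πα)`.
-/

open MeasureTheory Real Set Filter Topology

section Beta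

variable {a b : ℝ}

lemma ofReal_rpow_mul_one_sub_rpow {x : ℝ} (hx : x ∈ Icc (0 : ℝ) 1) :
    ((x ^ (a - 1) * (1 - x) ^ (b - 1) : ℝ) : ℂ) =
      (x : ℂ) ^ ((a : ℂ) - 1) * (1 - (x : ℂ)) ^ ((b : ℂ) - 1) := by
  rw [Complex.ofReal_mul, Complex.ofReal_cpow hx.1, Complex.ofReal_cpow (sub_nonneg.2 hx.2)]
  norm_cast

theorem intervalIntegrable_rpow_mul_one_sub_rpow (ha : 0 < a) (hb : 0 < b) :
    IntervalIntegrable (fun x : ℝ => x ^ (a - 1) * (1 - x) ^ (b - 1)) volume 0 1 := by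
  have h := Complex.betaIntegral_convergent (u := a) (v := b) (by simpa) (by simpa)
  rw [intervalIntegrable_iff_integrableOn_Ioc_of_le zero_le_one] at h ⊢
  refine IntegrableOn.congr_fun h.re (fun x hx => ?_) measurableSet_Ioc
  rw [← ofReal_rpow_mul_one_sub_rpow (Ioc_subset_Icc_self hx), RCLike.re_to_complex,
    Complex.ofReal_re]

theorem integral_rpow_mul_one_sub_rpow (ha : 0 < a) (hb : 0 < b) :
    ∫ x in (0 : ℝ)..1, x ^ (a - 1) * (1 - x) ^ (b - 1) = Gamma a * Gamma b / Gamma (a + b) := by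
  apply Complex.ofReal_injective
  rw [← intervalIntegral.integral_ofReal,
    intervalIntegral.integral_congr fun x hx => ofReal_rpow_mul_one_sub_rpow
      (by rwa [uIcc_of_le zero_le_one] at hx),
    ← Complex.betaIntegral, Complex.betaIntegral_eq_Gamma_mul_div _ _ (by simpa) (by simpa)]
  rw [← Complex.ofReal_add, Complex.Gamma_ofReal, Complex.Gamma_ofReal, Complex.Gamma_ofReal]
  norm_cast

end Beta

lemma one_sub_rpow_le_mul_rpow_sub_one {v α : ℝ} (hv0 : 0 < v) (hv1 : v ≤ 1) (hα : α ≤ 1) :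
    1 - v ^ α ≤ (1 - v) * v ^ (α - 1) := by
  have : 1 ≤ v ^ (α - 1) := one_le_rpow_of_pos_of_le_one_of_nonpos hv0 hv1 (by linarith)
  rw [sub_mul, one_mul, rpow_sub_one hv0.ne', mul_div_cancel₀ _ hv0.ne'] at *
  linarith

section
variable {α : ℝ}

lemma rpow_neg_mul_one_sub_one_sub_rpow_le {u : ℝ} (hu0 : 0 ≤ u) (hu1 : u < 1) (hα : α ≤ 1) :
    u ^ (-α) * (1 - (1 - u) ^ α) ≤ u ^ (1 - α) * (1 - u) ^ (α - 1) := by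
  rcases hu0.eq_or_lt with rfl | hu0
  · simpa using rpow_nonneg le_rfl (1 - α)
  have hv := sub_pos.2 hu1
  calc u ^ (-α) * (1 - (1 - u) ^ α) ≤ u ^ (-α) * (u * (1 - u) ^ (α - 1)) := by
        gcongr
        simpa using one_sub_rpow_le_mul_rpow_sub_one hv (by linarith) hα
    _ = u ^ (1 - α) * (1 - u) ^ (α - 1) := by
        rw [← mul_assoc, ← rpow_add_one hu0.ne']
        ring_nf

lemma continuousOn_rpow_neg_mul_one_sub_one_sub_rpow (hα : 0 < α) (hα1 : α < 1) :
    ContinuousOn (fun u : ℝ => u ^ (-α) * (1 - (1 - u) ^ α)) (Icc 0 1) := by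
  intro u hu
  rcases hu.1.eq_or_lt with rfl | hu0
  -- `0 ^ (-α) = 0`, and the squeeze `0 ≤ H u ≤ u ^ (1 - α) * (1 - u) ^ (α - 1)` makes it the limit.
  · have hB : ContinuousAt (fun u : ℝ => u ^ (1 - α) * (1 - u) ^ (α - 1)) 0 :=
      (continuousAt_rpow_const _ _ (Or.inr (by linarith))).mul
        ((continuousAt_const.sub continuousAt_id).rpow_const (Or.inl (by norm_num)))
    have hB0 : (0 : ℝ) ^ (1 - α) * (1 - 0) ^ (α - 1) = 0 := by
      rw [zero_rpow (by linarith), zero_mul]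
    rw [ContinuousWithinAt, zero_rpow (by linarith), zero_mul]
    refine squeeze_zero' (eventually_nhdsWithin_of_forall fun u hu => ?_) ?_
      (hB0 ▸ hB.tendsto.mono_left nhdsWithin_le_nhds)
    · exact mul_nonneg (rpow_nonneg hu.1 _)
        (sub_nonneg.2 (rpow_le_one (by linarith [hu.2]) (by linarith [hu.1]) hα.le))
    · filter_upwards [self_mem_nhdsWithin,
        eventually_nhdsWithin_of_eventually_nhds (eventually_lt_nhds zero_lt_one)] with u hu hu1
      exact rpow_neg_mul_one_sub_one_sub_rpow_le hu.1 hu1 hα1.le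
  · exact ((continuousAt_rpow_const _ _ (Or.inl hu0.ne')).mul
      (continuousAt_const.sub ((continuousAt_const.sub continuousAt_id).rpow_const
        (Or.inr hα.le)))).continuousWithinAt

lemma hasDerivAt_rpow_neg_mul_one_sub_one_sub_rpow {u : ℝ} (hu0 : 0 < u) (hu1 : u < 1) :
    HasDerivAt (fun u : ℝ => u ^ (-α) * (1 - (1 - u) ^ α))
      (α * (u ^ (-α) * (1 - u) ^ (α - 1) - u ^ (-α - 1) * (1 - (1 - u) ^ α))) u := by
  have h1 := hasDerivAt_rpow_const (p := -α) (Or.inl hu0.ne')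
  have h2 := (((hasDerivAt_id u).const_sub 1).rpow_const (p := α)
    (Or.inl (sub_pos.2 hu1).ne')).const_sub 1
  exact (h1.mul h2).congr_deriv (by simp only [id]; ring)

lemma rpow_neg_sub_one_mul_one_sub_one_sub_rpow_le {u : ℝ} (hu0 : 0 < u) (hu1 : u < 1)
    (hα : α ≤ 1) : u ^ (-α - 1) * (1 - (1 - u) ^ α) ≤ u ^ (-α) * (1 - u) ^ (α - 1) := by
  have key := one_sub_rpow_le_mul_rpow_sub_one (sub_pos.2 hu1) (by linarith) hα
  rw [sub_sub_cancel] at key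
  calc u ^ (-α - 1) * (1 - (1 - u) ^ α) ≤ u ^ (-α - 1) * (u * (1 - u) ^ (α - 1)) := by gcongr
    _ = u ^ (-α) * (1 - u) ^ (α - 1) := by
        rw [← mul_assoc, rpow_sub_one hu0.ne', div_mul_cancel₀ _ hu0.ne']

lemma intervalIntegrable_deriv_rpow_neg_mul_one_sub_one_sub_rpow (hα : 0 < α) (hα1 : α < 1) :
    IntervalIntegrable
      (fun u : ℝ => α * (u ^ (-α) * (1 - u) ^ (α - 1) - u ^ (-α - 1) * (1 - (1 - u) ^ α)))
      volume 0 1 := by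
  rw [intervalIntegrable_iff_integrableOn_Ioc_of_le zero_le_one]
  refine intervalIntegral.integrableOn_deriv_of_nonneg
    (continuousOn_rpow_neg_mul_one_sub_one_sub_rpow hα hα1)
    (fun u hu => hasDerivAt_rpow_neg_mul_one_sub_one_sub_rpow hu.1 hu.2) fun u hu => ?_
  exact mul_nonneg hα.le
    (sub_nonneg.2 (rpow_neg_sub_one_mul_one_sub_one_sub_rpow_le hu.1 hu.2 hα1.le))

theorem integral_deriv_rpow_neg_mul_one_sub_one_sub_rpow (hα : 0 < α) (hα1 : α < 1) :
    ∫ u in (0 : ℝ)..1, α * (u ^ (-α) * (1 - u) ^ (α - 1) - u ^ (-α - 1) * (1 - (1 - u) ^ α))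
      = 1 := by
  rw [intervalIntegral.integral_eq_sub_of_hasDerivAt_of_le zero_le_one
    (continuousOn_rpow_neg_mul_one_sub_one_sub_rpow hα hα1)
    (fun u hu => hasDerivAt_rpow_neg_mul_one_sub_one_sub_rpow hu.1 hu.2)
    (intervalIntegrable_deriv_rpow_neg_mul_one_sub_one_sub_rpow hα hα1)]
  simp [zero_rpow hα.ne', zero_rpow (neg_ne_zero.2 hα.ne')]

theorem intervalIntegrable_rpow_neg_mul_one_sub_rpow (hα : 0 < α) (hα1 : α < 1) :
    IntervalIntegrable (fun u : ℝ => u ^ (-α) * (1 - u) ^ (α - 1)) volume 0 1 := by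
  simpa only [sub_sub_cancel_left] using
    intervalIntegrable_rpow_mul_one_sub_rpow (sub_pos.2 hα1) hα

lemma rpow_neg_sub_one_mul_one_sub_one_sub_rpow_eq (hα : α ≠ 0) :
    (fun u : ℝ => u ^ (-α - 1) * (1 - (1 - u) ^ α)) = fun u => u ^ (-α) * (1 - u) ^ (α - 1) -
      α⁻¹ * (α * (u ^ (-α) * (1 - u) ^ (α - 1) - u ^ (-α - 1) * (1 - (1 - u) ^ α))) :=
  funext fun u => by rw [inv_mul_cancel_left₀ hα, sub_sub_cancel]

theorem intervalIntegrable_rpow_neg_sub_one_mul_one_sub_one_sub_rpow (hα : 0 < α) (hα1 : α < 1) :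
    IntervalIntegrable (fun u : ℝ => u ^ (-α - 1) * (1 - (1 - u) ^ α)) volume 0 1 := by
  rw [rpow_neg_sub_one_mul_one_sub_one_sub_rpow_eq hα.ne']
  exact (intervalIntegrable_rpow_neg_mul_one_sub_rpow hα hα1).sub
    ((intervalIntegrable_deriv_rpow_neg_mul_one_sub_one_sub_rpow hα hα1).const_mul _)

theorem integral_rpow_neg_sub_one_mul_one_sub_one_sub_rpow (hα : 0 < α) (hα1 : α < 1) :
    ∫ u in (0 : ℝ)..1, u ^ (-α - 1) * (1 - (1 - u) ^ α) = Gamma α * Gamma (1 - α) - α⁻¹ := by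
  rw [rpow_neg_sub_one_mul_one_sub_one_sub_rpow_eq hα.ne']
  rw [intervalIntegral.integral_sub (intervalIntegrable_rpow_neg_mul_one_sub_rpow hα hα1)
    ((intervalIntegrable_deriv_rpow_neg_mul_one_sub_one_sub_rpow hα hα1).const_mul _),
    intervalIntegral.integral_const_mul, integral_deriv_rpow_neg_mul_one_sub_one_sub_rpow hα hα1,
    mul_one]
  have := integral_rpow_mul_one_sub_rpow (sub_pos.2 hα1) hα
  rw [sub_sub_cancel_left, sub_add_cancel, Gamma_one, div_one] at this
  rw [this, mul_comm]

lemma rpow_neg_one_smul_max_rpow_sub_div {u : ℝ} (hu : 0 < u) (α : ℝ) :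
    (|(-1 : ℝ)| * u ^ ((-1 : ℝ) - 1)) •
      (((max (u ^ (-1 : ℝ)) 0) ^ α - (max (u ^ (-1 : ℝ) - 1) 0) ^ α) / u ^ (-1 : ℝ)) =
    u ^ (-α - 1) * (1 - (max (1 - u) 0) ^ α) := by
  have hmax : max (u⁻¹ - 1) 0 = max (1 - u) 0 * u⁻¹ := by
    rw [max_mul_of_nonneg _ _ (inv_nonneg.2 hu.le), zero_mul, sub_mul, one_mul,
      mul_inv_cancel₀ hu.ne']
  rw [rpow_neg_one, max_eq_left (inv_nonneg.2 hu.le), hmax,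
    mul_rpow (le_max_right _ _) (inv_nonneg.2 hu.le), inv_rpow hu.le, ← rpow_neg hu.le,
    rpow_sub_one hu.ne', rpow_sub_one hu.ne', rpow_neg_one, abs_neg, abs_one, smul_eq_mul]
  field_simp

theorem integral_Ioi_rpow_neg_sub_one_mul_one_sub_max_rpow (hα : 0 < α) (hα1 : α < 1) :
    ∫ u in Ioi (0 : ℝ), u ^ (-α - 1) * (1 - (max (1 - u) 0) ^ α) = Gamma α * Gamma (1 - α) := by
  have hIoc : EqOn (fun u : ℝ => u ^ (-α - 1) * (1 - (max (1 - u) 0) ^ α))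
      (fun u => u ^ (-α - 1) * (1 - (1 - u) ^ α)) (Ioc 0 1) := fun u hu => by
    simp only [max_eq_left (sub_nonneg.2 hu.2)]
  have hIoi : EqOn (fun u : ℝ => u ^ (-α - 1) * (1 - (max (1 - u) 0) ^ α))
      (fun u => u ^ (-α - 1)) (Ioi 1) := fun u hu => by
    simp only [max_eq_right (sub_nonpos.2 (mem_Ioi.1 hu).le), zero_rpow hα.ne', sub_zero, mul_one]
  have hint₁ : IntegrableOn (fun u : ℝ => u ^ (-α - 1) * (1 - (max (1 - u) 0) ^ α)) (Ioc 0 1) :=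
    ((intervalIntegrable_iff_integrableOn_Ioc_of_le zero_le_one).1
      (intervalIntegrable_rpow_neg_sub_one_mul_one_sub_one_sub_rpow hα hα1)).congr_fun
      hIoc.symm measurableSet_Ioc
  have hint₂ : IntegrableOn (fun u : ℝ => u ^ (-α - 1) * (1 - (max (1 - u) 0) ^ α)) (Ioi 1) :=
    (integrableOn_Ioi_rpow_of_lt (by linarith) zero_lt_one).congr_fun hIoi.symm measurableSet_Ioi
  rw [← Ioc_union_Ioi_eq_Ioi zero_le_one, setIntegral_union (Ioc_disjoint_Ioi le_rfl)
    measurableSet_Ioi hint₁ hint₂, setIntegral_congr_fun measurableSet_Ioc hIoc,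
    setIntegral_congr_fun measurableSet_Ioi hIoi, ← intervalIntegral.integral_of_le zero_le_one,
    integral_rpow_neg_sub_one_mul_one_sub_one_sub_rpow hα hα1,
    integral_Ioi_rpow_of_lt (by linarith) zero_lt_one]
  rw [one_rpow, sub_add_cancel, neg_div, div_neg, neg_neg, one_div, sub_add_cancel]

theorem integral_Ioi_max_rpow_sub_max_sub_one_rpow_div (hα : 0 < α) (hα1 : α < 1) :
    ∫ t in Ioi (0 : ℝ), ((max t 0) ^ α - (max (t - 1) 0) ^ α) / t = π / sin (π * α) := by
  rw [← integral_comp_rpow_Ioi _ (by norm_num : (-1 : ℝ) ≠ 0),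
    setIntegral_congr_fun measurableSet_Ioi fun u hu => rpow_neg_one_smul_max_rpow_sub_div hu α,
    integral_Ioi_rpow_neg_sub_one_mul_one_sub_max_rpow hα hα1, Gamma_mul_Gamma_one_sub]

end

lemma max_rpow_sub_max_sub_one_rpow_pos {α t : ℝ} (hα : 0 < α) (ht : 0 < t) :
    0 < (max t 0) ^ α - (max (t - 1) 0) ^ α :=
  sub_pos.2 (rpow_lt_rpow (le_max_right _ _)
    (max_lt (by linarith [le_max_left t 0]) (lt_max_of_lt_left ht)) hα)

/-- The kernel `K(t) = (sin(απ)/π) · (t₊^α − (t−1)₊^α)/t` is positive on `(0,∞)`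
and integrates to `1` over `(0,∞)`, for `α ∈ (0,1)`. -/
theorem kernel_positive_and_integral_one
    (α : ℝ) (hα : 0 < α) (hα1 : α < 1) :
    (∀ t : ℝ, 0 < t →
      0 < (Real.sin (α * Real.pi) / Real.pi) *
        ((max t 0) ^ α - (max (t - 1) 0) ^ α) / t) ∧
    ∫ t in Set.Ioi (0 : ℝ),
        (Real.sin (α * Real.pi) / Real.pi) *
          ((max t 0) ^ α - (max (t - 1) 0) ^ α) / t = 1 := by
  have hsin : 0 < sin (α * π) := sin_pos_of_pos_of_lt_pi (by positivity) (by nlinarith [pi_pos])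
  refine ⟨fun t ht => div_pos (mul_pos (div_pos hsin pi_pos)
    (max_rpow_sub_max_sub_one_rpow_pos hα ht)) ht, ?_⟩
  simp_rw [mul_div_assoc]
  rw [integral_const_mul, integral_Ioi_max_rpow_sub_max_sub_one_rpow_div hα hα1, mul_comm π α]
  field_simp
end
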